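/- Let p be a prime number, d ≥ 1, and let f₁, …, f_d be restricted power series over ℤ_p in d variables such that for each i all coefficients of f_i − z_i lie in p·ℤ_p (that is, each f_i is congruent to the coordinate variable z_i modulo p). Then the map F : ℤ_p^d → ℤ_p^d whose i-th coordinate is x ↦ f_i(x) is a bijection, and there exist restricted power series g₁, …, g_d over ℤ_p in d variables, with all coefficients of g_i − z_i in p·ℤ_p, such that the map with coordinates x ↦ g_i(x) is the inverse of F. -/

import Mathlib

/-- A family of coefficients indexed by multi-indices in `d` variables is
*restricted* if for every `m` all but finitely many coefficients are divisible
by `p^m`. -/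
def IsRestricted (p : ℕ) [Fact p.Prime] {d : ℕ} (a : (Fin d → ℕ) → ℤ_[p]) : Prop :=
  ∀ m : ℕ, {I : Fin d → ℕ | ¬ (p : ℤ_[p]) ^ m ∣ a I}.Finite

/-- Evaluation map `ℤ_p^d → ℤ_p^d` of a `d`-tuple of restricted power series in
`d` variables. -/
noncomputable def evalFamily (p : ℕ) [Fact p.Prime] {d : ℕ}
    (a : Fin d → (Fin d → ℕ) → ℤ_[p]) (x : Fin d → ℤ_[p]) : Fin d → ℤ_[p] :=
  fun i => ∑' I : Fin d → ℕ, a i I * ∏ j, x j ^ I j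

/-!
Let `A i` be the power series with coefficients `a i`, so `A ≡ X` coefficientwise modulo `p`.
Coefficients of restricted series tend to zero in `ℤ_[p]`, so restricted series can be substituted
into one another, and evaluation turns substitution into composition of maps of `ℤ_[p]^d`.
Because `A ≡ X`, the map `G ↦ X - (A - X) ∘ G` is a `p`-adic contraction on tuples of restricted
series; its fixed point `B` satisfies `A ∘ B = X` and `B ≡ X`. Hence `x ↦ A(x)` is a left inverse
of `x ↦ B(x)`, and the same argument applied to `B` makes `x ↦ B(x)` surjective, so the two maps
are mutually inverse.
-/
open Filter Topology IsLocalRing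

namespace PadicInt

variable {p : ℕ} [Fact p.Prime]

theorem pow_dvd_iff_norm_le {m : ℕ} {x : ℤ_[p]} :
    (p : ℤ_[p]) ^ m ∣ x ↔ ‖x‖ ≤ (p : ℝ) ^ (-m : ℤ) := by
  rw [norm_le_pow_iff_mem_span_pow, Ideal.mem_span_singleton]

theorem pow_dvd_tsum {ι : Type*} {m : ℕ} {f : ι → ℤ_[p]} (h : ∀ i, (p : ℤ_[p]) ^ m ∣ f i) :
    (p : ℤ_[p]) ^ m ∣ ∑' i, f i := by
  by_cases hf : Summable f
  · have hclosed : IsClosed {x : ℤ_[p] | (p : ℤ_[p]) ^ m ∣ x} := by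
      simp_rw [pow_dvd_iff_norm_le]
      exact isClosed_le continuous_norm continuous_const
    exact hclosed.mem_of_tendsto hf.hasSum (.of_forall fun s => Finset.dvd_sum fun i _ => h i)
  · rw [tsum_eq_zero_of_not_summable hf]
    exact dvd_zero _

theorem tendsto_cofinite_zero_iff {ι : Type*} {f : ι → ℤ_[p]} :
    Tendsto f cofinite (𝓝 0) ↔ ∀ m : ℕ, {i | ¬ (p : ℤ_[p]) ^ m ∣ f i}.Finite := by
  have hp : (0 : ℝ) < p := by exact_mod_cast (Fact.out : p.Prime).pos
  simp_rw [NormedAddGroup.tendsto_nhds_zero, eventually_cofinite, pow_dvd_iff_norm_le,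
    not_lt, not_le]
  refine ⟨fun h m => (h ((p : ℝ) ^ (-m : ℤ)) (zpow_pos hp _)).subset
    fun _ hi => le_of_lt (Set.mem_ofPred.1 hi), fun h ε hε => ?_⟩
  obtain ⟨m, hm⟩ := exists_pow_neg_lt p hε
  exact (h m).subset fun i hi => hm.trans_le hi

theorem tendsto_mul_of_tendsto_zero {ι : Type*} {a : ι → ℤ_[p]} (ha : Tendsto a cofinite (𝓝 0))
    (b : ι → ℤ_[p]) : Tendsto (fun i => a i * b i) cofinite (𝓝 0) :=
  ha.zero_mul_isBoundedUnder_le ⟨1, eventually_map.2 (.of_forall fun i => (b i).norm_le_one)⟩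

theorem tendsto_mul_uncurry_cofinite_nhds_zero {α β : Type*} {a : α → ℤ_[p]} {b : α → β → ℤ_[p]}
    (ha : Tendsto a cofinite (𝓝 0)) (hb : ∀ i, Tendsto (b i) cofinite (𝓝 0)) :
    Tendsto (fun q : α × β => a q.1 * b q.1 q.2) cofinite (𝓝 0) := by
  simp_rw [tendsto_cofinite_zero_iff] at *
  intro m
  refine ((ha m).biUnion fun i _ => (Set.finite_singleton i).prod (hb i m)).subset ?_
  rintro ⟨i, j⟩ hij
  simp only [Set.mem_ofPred_eq, Set.mem_iUnion, Set.mem_prod, Set.mem_singleton_iff] at hij ⊢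
  exact ⟨i, fun h => hij (h.mul_right _), rfl, fun h => hij (h.mul_left _)⟩

theorem smodEq_maximalIdeal_pow_iff {n : ℕ} {x y : ℤ_[p]} :
    x ≡ y [SMOD (maximalIdeal ℤ_[p] ^ n • ⊤ : Submodule ℤ_[p] ℤ_[p])] ↔
      (p : ℤ_[p]) ^ n ∣ x - y := by
  rw [SModEq.sub_mem, maximalIdeal_eq_span_p, Ideal.span_singleton_pow, smul_eq_mul,
    Ideal.mul_top, Ideal.mem_span_singleton]

theorem eq_of_forall_pow_dvd_sub {x y : ℤ_[p]} (h : ∀ n : ℕ, (p : ℤ_[p]) ^ n ∣ x - y) : x = y :=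
  (IsHausdorff.eq_iff_smodEq (I := maximalIdeal ℤ_[p])).2 fun n =>
    smodEq_maximalIdeal_pow_iff.2 (h n)

theorem exists_forall_pow_dvd_sub_of_pow_dvd_succ_sub {a : ℕ → ℤ_[p]}
    (h : ∀ n, (p : ℤ_[p]) ^ n ∣ a (n + 1) - a n) : ∃ l, ∀ n, (p : ℤ_[p]) ^ n ∣ a n - l := by
  have hcauchy {m n : ℕ} (hmn : m ≤ n) : (p : ℤ_[p]) ^ m ∣ a m - a n := by
    induction n, hmn using Nat.le_induction with
    | base => simp
    | succ n hmn ih =>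
      rw [← sub_add_sub_cancel _ (a n)]
      exact dvd_add ih ((pow_dvd_pow _ hmn).trans (dvd_sub_comm.1 (h n)))
  obtain ⟨l, hl⟩ := IsPrecomplete.prec (I := maximalIdeal ℤ_[p]) inferInstance
    fun hmn => smodEq_maximalIdeal_pow_iff.2 (hcauchy hmn)
  exact ⟨l, fun n => smodEq_maximalIdeal_pow_iff.1 (hl n)⟩

end PadicInt

theorem dvd_finsuppProd_pow_sub {R : Type*} [CommRing R] {c : R} {ι : Type*} {u v : ι → R}
    (h : ∀ j, c ∣ u j - v j) (k : ι →₀ ℕ) :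
    c ∣ (k.prod fun j n => u j ^ n) - k.prod fun j n => v j ^ n := by
  have h' (j : ι) : Ideal.Quotient.mk (Ideal.span {c}) (u j) = Ideal.Quotient.mk _ (v j) :=
    Ideal.Quotient.eq.2 (Ideal.mem_span_singleton.2 (h j))
  rw [← Ideal.mem_span_singleton, ← Ideal.Quotient.eq]
  simp only [map_finsuppProd, map_pow, h']

namespace MvPowerSeries

variable {σ τ : Type*}

theorem C_dvd_iff_forall_dvd_coeff {R : Type*} [CommSemiring R] {c : R}
    {f : MvPowerSeries σ R} : C c ∣ f ↔ ∀ n, c ∣ coeff n f := by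
  constructor
  · rintro ⟨g, rfl⟩ n
    rw [coeff_C_mul]
    exact dvd_mul_right _ _
  intro h
  choose g hg using h
  let G : MvPowerSeries σ R := g
  exact ⟨G, ext fun n => by rw [coeff_C_mul]; exact hg n⟩

theorem isRestricted_one_iff_tendsto {R : Type*} [NormedRing R] {f : MvPowerSeries σ R} :
    IsRestricted 1 f ↔ Tendsto (fun n => coeff n f) cofinite (𝓝 0) := by
  simp [IsRestricted, Finsupp.prod, tendsto_zero_iff_norm_tendsto_zero]

variable {p : ℕ} [Fact p.Prime]

theorem isRestricted_one_iff_finite {f : MvPowerSeries σ ℤ_[p]} :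
    IsRestricted 1 f ↔ ∀ m : ℕ, {n | ¬ (p : ℤ_[p]) ^ m ∣ coeff n f}.Finite :=
  isRestricted_one_iff_tendsto.trans PadicInt.tendsto_cofinite_zero_iff

theorem isRestricted_one_of_forall_exists_dvd_sub {f : MvPowerSeries σ ℤ_[p]}
    (h : ∀ m : ℕ, ∃ g, IsRestricted 1 g ∧ C ((p : ℤ_[p]) ^ m) ∣ g - f) : IsRestricted 1 f := by
  refine isRestricted_one_iff_finite.2 fun m => ?_
  obtain ⟨g, hg, hgf⟩ := h m
  refine (isRestricted_one_iff_finite.1 hg m).subset fun n hn hgn => hn ?_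
  simpa using (dvd_sub hgn (C_dvd_iff_forall_dvd_coeff.1 hgf n))

theorem isRestricted_one_finsuppProd_pow {g : τ → MvPowerSeries σ ℤ_[p]}
    (hg : ∀ j, IsRestricted 1 (g j)) (k : τ →₀ ℕ) : IsRestricted 1 (k.prod fun j n => g j ^ n) :=
  prod_mem (S := IsRestricted.subring 1) fun j _ => pow_mem (S := IsRestricted.subring 1) (hg j) _

theorem eq_of_forall_C_pow_dvd_sub {f g : MvPowerSeries σ ℤ_[p]}
    (h : ∀ m : ℕ, C ((p : ℤ_[p]) ^ m) ∣ f - g) : f = g :=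
  ext fun n => PadicInt.eq_of_forall_pow_dvd_sub fun m => by
    simpa using C_dvd_iff_forall_dvd_coeff.1 (h m) n

/-- Evaluation at a point of the closed unit polydisc; the sum converges when `f` is restricted. -/
noncomputable def padicEval (f : MvPowerSeries σ ℤ_[p]) (x : σ → ℤ_[p]) : ℤ_[p] :=
  ∑' n, coeff n f * n.prod fun i k => x i ^ k

theorem tendsto_padicEval_term {f : MvPowerSeries σ ℤ_[p]} (hf : IsRestricted 1 f)
    (x : σ → ℤ_[p]) : Tendsto (fun n => coeff n f * n.prod fun i k => x i ^ k) cofinite (𝓝 0) :=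
  PadicInt.tendsto_mul_of_tendsto_zero (isRestricted_one_iff_tendsto.1 hf) _

theorem padicEval_one (x : σ → ℤ_[p]) : padicEval 1 x = 1 := by
  classical
  rw [padicEval, tsum_eq_single 0 fun n hn => by simp [coeff_one, hn]]
  simp

theorem padicEval_X (i : σ) (x : σ → ℤ_[p]) : padicEval (X i) x = x i := by
  classical
  rw [padicEval, tsum_eq_single (Finsupp.single i 1) fun n hn => by simp [coeff_X, hn]]
  simp

theorem padicEval_mul {f g : MvPowerSeries σ ℤ_[p]} (hf : IsRestricted 1 f)
    (hg : IsRestricted 1 g) (x : σ → ℤ_[p]) :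
    padicEval (f * g) x = padicEval f x * padicEval g x := by
  classical
  have hf' := tendsto_padicEval_term hf x
  have hg' := tendsto_padicEval_term hg x
  have hsf := NonarchimedeanAddGroup.summable_of_tendsto_cofinite_zero hf'
  have hsg := NonarchimedeanAddGroup.summable_of_tendsto_cofinite_zero hg'
  have hsfg := NonarchimedeanAddGroup.summable_of_tendsto_cofinite_zero
    (tendsto_mul_cofinite_nhds_zero hf' hg')
  rw [padicEval, padicEval, padicEval, hsf.tsum_mul_tsum_eq_tsum_sum_antidiagonal hsg hsfg]
  refine tsum_congr fun n => ?_
  rw [coeff_mul, Finset.sum_mul]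
  refine Finset.sum_congr rfl fun k hk => ?_
  rw [← Finset.HasAntidiagonal.mem_antidiagonal.1 hk,
    Finsupp.prod_add_index' (by simp) fun _ _ _ => pow_add _ _ _]
  ring

noncomputable def padicEvalMonoidHom (x : σ → ℤ_[p]) :
    IsRestricted.subring (R := ℤ_[p]) (σ := σ) 1 →* ℤ_[p] where
  toFun f := padicEval f x
  map_one' := padicEval_one x
  map_mul' f g := padicEval_mul f.2 g.2 x

theorem padicEval_finsuppProd_pow {g : τ → MvPowerSeries σ ℤ_[p]}
    (hg : ∀ j, IsRestricted 1 (g j)) (k : τ →₀ ℕ) (x : σ → ℤ_[p]) :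
    padicEval (k.prod fun j n => g j ^ n) x = k.prod fun j n => padicEval (g j) x ^ n := by
  let g' (j : τ) : IsRestricted.subring (R := ℤ_[p]) (σ := σ) 1 := ⟨g j, hg j⟩
  have hcoe : ((k.prod fun j n => g' j ^ n : IsRestricted.subring 1) : MvPowerSeries σ ℤ_[p]) =
      k.prod fun j n => g j ^ n := by
    simp [Finsupp.prod, g']
  rw [← hcoe]
  exact (map_finsuppProd (padicEvalMonoidHom x) k _).trans (by simp only [map_pow]; rfl)

/-- Substitution of `g` into `f`; each coefficient converges when `f` is restricted, since all
coefficients of the `g j` lie in `ℤ_[p]`. -/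
noncomputable def padicSubst (f : MvPowerSeries τ ℤ_[p]) (g : τ → MvPowerSeries σ ℤ_[p]) :
    MvPowerSeries σ ℤ_[p] :=
  fun n => ∑' k, coeff k f * coeff n (k.prod fun j i => g j ^ i)

theorem coeff_padicSubst (f : MvPowerSeries τ ℤ_[p]) (g : τ → MvPowerSeries σ ℤ_[p])
    (n : σ →₀ ℕ) :
    coeff n (padicSubst f g) = ∑' k, coeff k f * coeff n (k.prod fun j i => g j ^ i) :=
  rfl

theorem summable_coeff_padicSubst {f : MvPowerSeries τ ℤ_[p]} (hf : IsRestricted 1 f)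
    (g : τ → MvPowerSeries σ ℤ_[p]) (n : σ →₀ ℕ) :
    Summable fun k => coeff k f * coeff n (k.prod fun j i => g j ^ i) :=
  NonarchimedeanAddGroup.summable_of_tendsto_cofinite_zero <|
    PadicInt.tendsto_mul_of_tendsto_zero (isRestricted_one_iff_tendsto.1 hf) _

theorem isRestricted_padicSubst {f : MvPowerSeries τ ℤ_[p]} (hf : IsRestricted 1 f)
    {g : τ → MvPowerSeries σ ℤ_[p]} (hg : ∀ j, IsRestricted 1 (g j)) :
    IsRestricted 1 (padicSubst f g) := by
  have hterm := PadicInt.tendsto_mul_uncurry_cofinite_nhds_zero (isRestricted_one_iff_tendsto.1 hf)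
    fun k => isRestricted_one_iff_tendsto.1 (isRestricted_one_finsuppProd_pow hg k)
  rw [PadicInt.tendsto_cofinite_zero_iff] at hterm
  refine isRestricted_one_iff_finite.2 fun m => ((hterm m).image Prod.snd).subset fun n hn => ?_
  by_contra hnot
  exact hn (PadicInt.pow_dvd_tsum fun k => not_not.1 fun hk => hnot ⟨(k, n), hk, rfl⟩)

theorem C_pow_dvd_padicSubst {f : MvPowerSeries τ ℤ_[p]} {t : ℕ} (hf : C ((p : ℤ_[p]) ^ t) ∣ f)
    (g : τ → MvPowerSeries σ ℤ_[p]) : C ((p : ℤ_[p]) ^ t) ∣ padicSubst f g :=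
  C_dvd_iff_forall_dvd_coeff.2 fun _ => PadicInt.pow_dvd_tsum fun k =>
    (C_dvd_iff_forall_dvd_coeff.1 hf k).mul_right _

theorem C_pow_dvd_padicSubst_sub {f : MvPowerSeries τ ℤ_[p]} (hf : IsRestricted 1 f) {t m : ℕ}
    (hft : C ((p : ℤ_[p]) ^ t) ∣ f) {u v : τ → MvPowerSeries σ ℤ_[p]}
    (huv : ∀ j, C ((p : ℤ_[p]) ^ m) ∣ u j - v j) :
    C ((p : ℤ_[p]) ^ (t + m)) ∣ padicSubst f u - padicSubst f v := by
  refine C_dvd_iff_forall_dvd_coeff.2 fun n => ?_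
  rw [map_sub, coeff_padicSubst, coeff_padicSubst,
    ← (summable_coeff_padicSubst hf u n).tsum_sub (summable_coeff_padicSubst hf v n)]
  refine PadicInt.pow_dvd_tsum fun k => ?_
  rw [← mul_sub, pow_add, ← map_sub]
  exact mul_dvd_mul (C_dvd_iff_forall_dvd_coeff.1 hft k)
    (C_dvd_iff_forall_dvd_coeff.1 (dvd_finsuppProd_pow_sub huv k) n)

theorem padicSubst_add {f₁ f₂ : MvPowerSeries τ ℤ_[p]} (hf₁ : IsRestricted 1 f₁)
    (hf₂ : IsRestricted 1 f₂) (g : τ → MvPowerSeries σ ℤ_[p]) :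
    padicSubst (f₁ + f₂) g = padicSubst f₁ g + padicSubst f₂ g := by
  ext n
  simp only [map_add, coeff_padicSubst, add_mul]
  exact (summable_coeff_padicSubst hf₁ g n).tsum_add (summable_coeff_padicSubst hf₂ g n)

theorem padicSubst_X (i : τ) (g : τ → MvPowerSeries σ ℤ_[p]) :
    padicSubst (X i) g = g i := by
  classical
  ext n
  rw [coeff_padicSubst, tsum_eq_single (Finsupp.single i 1) fun k hk => by simp [coeff_X, hk]]
  simp

theorem padicEval_padicSubst {f : MvPowerSeries τ ℤ_[p]} (hf : IsRestricted 1 f)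
    {g : τ → MvPowerSeries σ ℤ_[p]} (hg : ∀ j, IsRestricted 1 (g j)) (x : σ → ℤ_[p]) :
    padicEval (padicSubst f g) x = padicEval f fun j => padicEval (g j) x := by
  set g' : (τ →₀ ℕ) → MvPowerSeries σ ℤ_[p] := fun k => k.prod fun j i => g j ^ i
  have hg' (k : τ →₀ ℕ) : IsRestricted 1 (g' k) := isRestricted_one_finsuppProd_pow hg k
  have hsum : Summable (Function.uncurry fun k (n : σ →₀ ℕ) =>
      coeff k f * (coeff n (g' k) * n.prod fun i k => x i ^ k)) :=
    NonarchimedeanAddGroup.summable_of_tendsto_cofinite_zero <|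
      PadicInt.tendsto_mul_uncurry_cofinite_nhds_zero
        (b := fun k n => coeff n (g' k) * n.prod fun i k => x i ^ k)
        (isRestricted_one_iff_tendsto.1 hf) fun k => tendsto_padicEval_term (hg' k) x
  calc padicEval (padicSubst f g) x
      = ∑' n, ∑' k, coeff k f * (coeff n (g' k) * n.prod fun i k => x i ^ k) := by
        refine tsum_congr fun n => ?_
        rw [coeff_padicSubst, ← (summable_coeff_padicSubst hf g n).tsum_mul_right]
        simp only [mul_assoc, g']
    _ = ∑' k, coeff k f * padicEval (g' k) x := by
        rw [hsum.tsum_comm]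
        refine tsum_congr fun k => ?_
        rw [padicEval, ← (NonarchimedeanAddGroup.summable_of_tendsto_cofinite_zero
          (tendsto_padicEval_term (hg' k) x)).tsum_mul_left]
    _ = padicEval f fun j => padicEval (g j) x := by
        simp only [padicEval_finsuppProd_pow hg, g']
        rfl

theorem leftInverse_padicEval {A : τ → MvPowerSeries σ ℤ_[p]} {B : σ → MvPowerSeries τ ℤ_[p]}
    (hA : ∀ i, IsRestricted 1 (A i)) (hB : ∀ j, IsRestricted 1 (B j))
    (hAB : ∀ i, padicSubst (A i) B = X i) :
    Function.LeftInverse (fun x i => padicEval (A i) x) (fun y j => padicEval (B j) y) :=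
  fun y => funext fun i =>
    (padicEval_padicSubst (hA i) hB y).symm.trans (by rw [hAB, padicEval_X])

theorem exists_fixedPoint_of_contracting {ι : Type*}
    (Φ : (ι → MvPowerSeries σ ℤ_[p]) → ι → MvPowerSeries σ ℤ_[p])
    (hΦ : ∀ m u v, (∀ i, C ((p : ℤ_[p]) ^ m) ∣ u i - v i) →
      ∀ i, C ((p : ℤ_[p]) ^ (m + 1)) ∣ Φ u i - Φ v i)
    (u₀ : ι → MvPowerSeries σ ℤ_[p]) :
    ∃ u, Φ u = u ∧ ∀ m i, C ((p : ℤ_[p]) ^ m) ∣ Φ^[m] u₀ i - u i := by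
  have hstep (m : ℕ) (i : ι) : C ((p : ℤ_[p]) ^ m) ∣ Φ^[m + 1] u₀ i - Φ^[m] u₀ i := by
    induction m generalizing i with
    | zero => simp
    | succ m ih =>
      have := hΦ m _ _ ih i
      rwa [← Function.iterate_succ_apply' Φ (m + 1), ← Function.iterate_succ_apply' Φ m] at this
  have hlim (i : ι) (n : σ →₀ ℕ) :
      ∃ l, ∀ m, (p : ℤ_[p]) ^ m ∣ coeff n (Φ^[m] u₀ i) - l :=
    PadicInt.exists_forall_pow_dvd_sub_of_pow_dvd_succ_sub fun m => by
      simpa using C_dvd_iff_forall_dvd_coeff.1 (hstep m i) n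
  choose l hl using hlim
  let u (i : ι) : MvPowerSeries σ ℤ_[p] := l i
  have hu (m : ℕ) (i : ι) : C ((p : ℤ_[p]) ^ m) ∣ Φ^[m] u₀ i - u i :=
    C_dvd_iff_forall_dvd_coeff.2 fun n => by rw [map_sub]; exact hl i n m
  refine ⟨u, funext fun i => eq_of_forall_C_pow_dvd_sub fun m => ?_, hu⟩
  have hΦu := hΦ m _ _ (hu m) i
  rw [← Function.iterate_succ_apply' Φ m] at hΦu
  rw [← sub_sub_sub_cancel_left _ _ (Φ^[m + 1] u₀ i)]
  exact (map_dvd C (pow_dvd_pow _ m.le_succ)).trans (dvd_sub (hu (m + 1) i) hΦu)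

theorem exists_padicSubst_eq_X {A : σ → MvPowerSeries σ ℤ_[p]}
    (hA : ∀ i, IsRestricted 1 (A i)) (hAX : ∀ i, C (p : ℤ_[p]) ∣ A i - X i) :
    ∃ B : σ → MvPowerSeries σ ℤ_[p], (∀ i, IsRestricted 1 (B i)) ∧
      (∀ i, C (p : ℤ_[p]) ∣ B i - X i) ∧ ∀ i, padicSubst (A i) B = X i := by
  have hX (i : σ) : IsRestricted 1 (X i : MvPowerSeries σ ℤ_[p]) := isRestricted_monomial 1 _ _
  have hD (i : σ) : IsRestricted 1 (A i - X i) :=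
    (IsRestricted.subring 1).sub_mem (hA i) (hX i)
  have hDp (i : σ) : C ((p : ℤ_[p]) ^ 1) ∣ A i - X i := by rw [pow_one]; exact hAX i
  -- `padicSubst (A i) B = X i` says `B = Φ B`, and `Φ` contracts since `A i ≡ X i` mod `p`.
  let Φ (G : σ → MvPowerSeries σ ℤ_[p]) (i : σ) : MvPowerSeries σ ℤ_[p] :=
    X i - padicSubst (A i - X i) G
  have hΦ (m : ℕ) (u v : σ → MvPowerSeries σ ℤ_[p]) (huv : ∀ i, C ((p : ℤ_[p]) ^ m) ∣ u i - v i)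
      (i : σ) : C ((p : ℤ_[p]) ^ (m + 1)) ∣ Φ u i - Φ v i := by
    rw [sub_sub_sub_cancel_left, add_comm]
    exact dvd_sub_comm.1 (C_pow_dvd_padicSubst_sub (hD i) (hDp i) huv)
  have hΦres (m : ℕ) (i : σ) : IsRestricted 1 (Φ^[m] X i) := by
    induction m generalizing i with
    | zero => exact hX i
    | succ m ih =>
      rw [Function.iterate_succ_apply']
      exact (IsRestricted.subring 1).sub_mem (hX i) (isRestricted_padicSubst (hD i) ih)
  obtain ⟨B, hB, hBlim⟩ := exists_fixedPoint_of_contracting Φ hΦ X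
  refine ⟨B, fun i => isRestricted_one_of_forall_exists_dvd_sub fun m =>
    ⟨_, hΦres m i, hBlim m i⟩, fun i => ?_, fun i => ?_⟩
  · rw [← hB, sub_sub_cancel_left, dvd_neg, ← pow_one (p : ℤ_[p])]
    exact C_pow_dvd_padicSubst (hDp i) B
  · have hBi : X i - padicSubst (A i - X i) B = B i := congrFun hB i
    rw [← add_sub_cancel (X i) (A i), padicSubst_add (hX i) (hD i), padicSubst_X, ← hBi]
    ring

section OfCoeffs

variable {R : Type*}

def ofCoeffs [Finite σ] (c : (σ → ℕ) → R) : MvPowerSeries σ R := fun n => c n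

@[simp]
theorem coeff_ofCoeffs [Finite σ] [Semiring R] (c : (σ → ℕ) → R) (n : σ →₀ ℕ) :
    coeff n (ofCoeffs c) = c n :=
  rfl

end OfCoeffs

end MvPowerSeries

section FinCoeffs

open MvPowerSeries

variable {p : ℕ} [Fact p.Prime] {d : ℕ}

theorem isRestricted_iff_isRestricted_ofCoeffs (c : (Fin d → ℕ) → ℤ_[p]) :
    IsRestricted p c ↔ MvPowerSeries.IsRestricted 1 (ofCoeffs c) := by
  rw [isRestricted_one_iff_finite]
  refine forall_congr' fun m =>
    ⟨fun h => h.preimage_embedding Finsupp.equivFunOnFinite.toEmbedding, fun h => ?_⟩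
  exact Set.Finite.of_preimage (f := Finsupp.equivFunOnFinite) h
    Finsupp.equivFunOnFinite.surjective

theorem evalFamily_eq_padicEval (c : Fin d → (Fin d → ℕ) → ℤ_[p]) :
    evalFamily p c = fun x i => padicEval (ofCoeffs (c i)) x := by
  ext x i
  rw [evalFamily, padicEval, ← Finsupp.equivFunOnFinite.tsum_eq]
  refine tsum_congr fun n => ?_
  rw [Finsupp.prod_fintype _ _ fun _ => pow_zero _]
  rfl

theorem forall_dvd_sub_ite_iff_C_dvd_ofCoeffs_sub_X (c : (Fin d → ℕ) → ℤ_[p]) (i : Fin d) :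
    (∀ I, (p : ℤ_[p]) ∣ c I - if I = Pi.single i 1 then 1 else 0) ↔
      C (p : ℤ_[p]) ∣ ofCoeffs c - X i := by
  classical
  rw [C_dvd_iff_forall_dvd_coeff, Finsupp.equivFunOnFinite.forall_congr_left]
  refine forall_congr' fun n => ?_
  simp [coeff_X, Equiv.symm_apply_eq]

end FinCoeffs

theorem restricted_power_series_hensel_inverse_general (p : ℕ) [Fact p.Prime]
    (d : ℕ) (a : Fin d → (Fin d → ℕ) → ℤ_[p])
    (ha : ∀ i, IsRestricted p (a i))
    (hcong : ∀ i I, (p : ℤ_[p]) ∣ (a i I - if I = Pi.single i 1 then 1 else 0)) :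
    Function.Bijective (evalFamily p a) ∧
    ∃ b : Fin d → (Fin d → ℕ) → ℤ_[p],
      (∀ i, IsRestricted p (b i)) ∧
      (∀ i I, (p : ℤ_[p]) ∣ (b i I - if I = Pi.single i 1 then 1 else 0)) ∧
      Function.LeftInverse (evalFamily p b) (evalFamily p a) ∧
      Function.RightInverse (evalFamily p b) (evalFamily p a) := by
  have hA (i : Fin d) := (isRestricted_iff_isRestricted_ofCoeffs _).1 (ha i)
  have hAX (i : Fin d) := (forall_dvd_sub_ite_iff_C_dvd_ofCoeffs_sub_X _ i).1 (hcong i)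
  obtain ⟨B, hB, hBX, hAB⟩ := MvPowerSeries.exists_padicSubst_eq_X hA hAX
  obtain ⟨B', hB', -, hBB'⟩ := MvPowerSeries.exists_padicSubst_eq_X hB hBX
  let b (i : Fin d) (I : Fin d → ℕ) : ℤ_[p] :=
    MvPowerSeries.coeff (Finsupp.equivFunOnFinite.symm I) (B i)
  have hb (i : Fin d) : MvPowerSeries.ofCoeffs (b i) = B i := by ext n; simp [b]
  have right : Function.LeftInverse (evalFamily p a) (evalFamily p b) := by
    simpa only [evalFamily_eq_padicEval, hb] using MvPowerSeries.leftInverse_padicEval hA hB hAB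
  have left : Function.LeftInverse (evalFamily p b) (evalFamily p a) := by
    refine right.rightInverse_of_surjective ?_
    simpa only [evalFamily_eq_padicEval, hb] using
      (MvPowerSeries.leftInverse_padicEval hB hB' hBB').surjective
  refine ⟨⟨left.injective, right.surjective⟩, b, fun i => ?_, fun i => ?_, left, right⟩
  · rw [isRestricted_iff_isRestricted_ofCoeffs, hb]
    exact hB i
  · rw [forall_dvd_sub_ite_iff_C_dvd_ofCoeffs_sub_X, hb]
    exact hBX i

/-- Hensel-type invertibility: a `d`-tuple of restricted power series, each
congruent to the corresponding coordinate variable modulo `p`, defines a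
bijection of `ℤ_p^d`, whose inverse is again given by restricted power series
congruent to the coordinates modulo `p`. -/
theorem restricted_power_series_hensel_inverse (p : ℕ) [Fact p.Prime]
    (d : ℕ) (hd : 1 ≤ d) (a : Fin d → (Fin d → ℕ) → ℤ_[p])
    (ha : ∀ i, IsRestricted p (a i))
    (hcong : ∀ i I, (p : ℤ_[p]) ∣ (a i I - if I = Pi.single i 1 then 1 else 0)) :
    Function.Bijective (evalFamily p a) ∧
    ∃ b : Fin d → (Fin d → ℕ) → ℤ_[p],
      (∀ i, IsRestricted p (b i)) ∧
      (∀ i I, (p : ℤ_[p]) ∣ (b i I - if I = Pi.single i 1 then 1 else 0)) ∧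
      Function.LeftInverse (evalFamily p b) (evalFamily p a) ∧
      Function.RightInverse (evalFamily p b) (evalFamily p a) :=
  restricted_power_series_hensel_inverse_general p d a ha hcong
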